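/- arXiv:1409.5730 — 7 statements merged into one kernel-verified Lean document; each statement's English description precedes it below -/
import Mathlib

section
/- If G is a group containing elements x and y which do not commute, but for which xᵖ and yᵠ commute for some positive integers p, q, then the commutator [x, y] is a generalized torsion element of G. -/
private def PC {G : Type*} [Group G] (c a : G) : Prop :=
  ∃ l : List G, l ≠ [] ∧ (l.map (fun g => g⁻¹ * c * g)).prod = a

private lemma PC_self {G : Type*} [Group G] (c : G) : PC c c :=
  ⟨[1], by simp, by simp⟩

private lemma PC_mul {G : Type*} [Group G] {c a b : G} (ha : PC c a) (hb : PC c b) :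
    PC c (a * b) := by
  obtain ⟨la, hla, ha⟩ := ha
  obtain ⟨lb, hlb, hb⟩ := hb
  exact ⟨la ++ lb, by simp [hla], by simp [ha, hb]⟩

private lemma PC_conj {G : Type*} [Group G] {c a : G} (t : G) (ha : PC c a) :
    PC c (t⁻¹ * a * t) := by
  obtain ⟨la, hla, ha⟩ := ha
  refine ⟨la.map (· * t), by simp [hla], ?_⟩
  have : (la.map (· * t)).map (fun g => g⁻¹ * c * g)
      = la.map (fun g => t⁻¹ * (g⁻¹ * c * g) * t) := by
    rw [List.map_map]
    exact List.map_congr_left (fun g _ => by simp [Function.comp]; group)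
  rw [this, ← ha]
  have h2 : la.map (fun g => t⁻¹ * (g⁻¹ * c * g) * t)
      = (la.map (fun g => g⁻¹ * c * g)).map (fun u => t⁻¹ * u * t) := by
    simp [List.map_map, Function.comp]
  rw [h2]
  induction (la.map (fun g => g⁻¹ * c * g)) with
  | nil => simp
  | cons hd tl ih => simp [ih]; group

private lemma PC_left {G : Type*} [Group G] {c : G} (g h : G)
    (hgh : PC c (g⁻¹ * h⁻¹ * g * h)) :
    ∀ n : ℕ, 0 < n → PC c ((g ^ n)⁻¹ * h⁻¹ * g ^ n * h) := by
  intro n hn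
  induction n with
  | zero => omega
  | succ m ih =>
    rcases Nat.eq_zero_or_pos m with hm | hm
    · subst hm; simpa using hgh
    · have key : (g ^ (m + 1))⁻¹ * h⁻¹ * g ^ (m + 1) * h
          = ((g ^ m)⁻¹ * (g⁻¹ * h⁻¹ * g * h) * g ^ m) * ((g ^ m)⁻¹ * h⁻¹ * g ^ m * h) := by
        rw [pow_succ']
        group
      rw [key]
      exact PC_mul (PC_conj _ hgh) (ih hm)

private lemma PC_right {G : Type*} [Group G] {c : G} (g h : G)
    (hgh : PC c (g⁻¹ * h⁻¹ * g * h)) :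
    ∀ n : ℕ, 0 < n → PC c (g⁻¹ * (h ^ n)⁻¹ * g * h ^ n) := by
  intro n hn
  induction n with
  | zero => omega
  | succ m ih =>
    rcases Nat.eq_zero_or_pos m with hm | hm
    · subst hm; simpa using hgh
    · have key : g⁻¹ * (h ^ (m + 1))⁻¹ * g * h ^ (m + 1)
          = (g⁻¹ * (h ^ m)⁻¹ * g * h ^ m) * ((h ^ m)⁻¹ * (g⁻¹ * h⁻¹ * g * h) * h ^ m) := by
        rw [pow_succ]
        group
      rw [key]
      exact PC_mul (ih hm) (PC_conj _ hgh)

theorem commuting_powers_generalized_torsion (G : Type*) [Group G] (x y : G)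
    (hxy : x * y ≠ y * x) (p q : ℕ) (hp : 0 < p) (hq : 0 < q)
    (hcomm : x ^ p * y ^ q = y ^ q * x ^ p) :
    x⁻¹ * y⁻¹ * x * y ≠ 1 ∧ ∃ l : List G, l ≠ [] ∧
      (l.map (fun g => g⁻¹ * (x⁻¹ * y⁻¹ * x * y) * g)).prod = 1 := by
  constructor
  · intro h
    apply hxy
    have h2 : y * x * (x⁻¹ * y⁻¹ * x * y) = y * x * 1 := by rw [h]
    rw [mul_one] at h2
    calc x * y = y * x * (x⁻¹ * y⁻¹ * x * y) := by group
    _ = y * x := h2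
  · set c := x⁻¹ * y⁻¹ * x * y with hc
    have h1 : PC c (x⁻¹ * (y ^ q)⁻¹ * x * y ^ q) :=
      PC_right x y (PC_self c) q hq
    have h2 : PC c ((x ^ p)⁻¹ * (y ^ q)⁻¹ * x ^ p * y ^ q) :=
      PC_left x (y ^ q) h1 p hp
    have h3 : (x ^ p)⁻¹ * (y ^ q)⁻¹ * x ^ p * y ^ q = 1 := by
      have h4 : (x ^ p)⁻¹ * (y ^ q)⁻¹ * x ^ p * y ^ q
          = (x ^ p)⁻¹ * (y ^ q)⁻¹ * (x ^ p * y ^ q) := by group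
      rw [h4, hcomm]; group
    rw [h3] at h2
    exact h2
end

section
/- If a group G contains elements x and y that do not commute but such that xᵖ commutes with yᵠ for some positive integers p, q, then G is not bi-orderable. -/
theorem commuting_powers_not_biorderable (G : Type*) [Group G] (x y : G)
    (hxy : x * y ≠ y * x) (p q : ℕ) (hp : 0 < p) (hq : 0 < q)
    (hcomm : x ^ p * y ^ q = y ^ q * x ^ p) :
    ¬ ∃ r : G → G → Prop, IsStrictTotalOrder G r ∧
      ∀ a b c : G, r b c → r (a * b) (a * c) ∧ r (b * a) (c * a) := by
  rintro ⟨r, hsto, hcompat⟩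
  haveI := hsto
  have hmono : ∀ (a b : G) (n : ℕ), 0 < n → r a b → r (a ^ n) (b ^ n) := by
    intro a b n hn hab
    induction n with
    | zero => omega
    | succ n ih =>
      rcases Nat.eq_zero_or_pos n with h0 | hpos
      · subst h0; simpa using hab
      · have h1 : r (a ^ (n + 1)) (a * b ^ n) := by
          have := (hcompat a (a ^ n) (b ^ n) (ih hpos)).1
          simpa [pow_succ'] using this
        have h2 : r (a * b ^ n) (b ^ (n + 1)) := by
          have := (hcompat (b ^ n) a b hab).2
          simpa [pow_succ'] using this
        exact trans_of r h1 h2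
  have hroot : ∀ (a b : G) (n : ℕ), 0 < n → a ^ n = b ^ n → a = b := by
    intro a b n hn he
    rcases trichotomous_of r a b with h | h | h
    · exact absurd (he ▸ hmono a b n hn h) (irrefl_of r _)
    · exact h
    · exact absurd (he ▸ hmono b a n hn h) (irrefl_of r _)
  have hcl : ∀ (g h : G) (n : ℕ), 0 < n → g * h ^ n = h ^ n * g → g * h = h * g := by
    intro g h n hn hc
    have hk : (g * h * g⁻¹) ^ n = h ^ n := by
      rw [conj_pow]
      rw [mul_inv_eq_iff_eq_mul]; exact hc
    have := hroot _ _ n hn hk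
    have : g * h = h * g := by
      have := congrArg (· * g) this
      simpa [mul_assoc] using this
    exact this
  have h1 : y ^ q * x = x * y ^ q := hcl (y ^ q) x p hp hcomm.symm
  have h2 : x * y = y * x := hcl x y q hq h1.symm
  exact hxy h2
end

section
/- For integers p, q with |p| > 1 and |q| > 1, the group G_{p,q} = ⟨x, y | xᵖ = yᵠ⟩ is nonabelian. -/
/-- The torus-knot-type group ⟨x, y | xᵖ = yᵠ⟩, with x ↦ true, y ↦ false. -/
def TorusRels (p q : ℤ) : Set (FreeGroup Bool) :=
  {FreeGroup.of true ^ p * (FreeGroup.of false ^ q)⁻¹}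

/-! The cycles `(0 1 … m)` and `(m m+1 … m+n)` on `ℕ` have orders `m + 1` and `n + 1` and do not
commute, as evaluating both products at their common point `m` shows. Sending `x` and `y` to them
is a homomorphism out of `G_{p,q}` whenever `|p| = m + 1` and `|q| = n + 1`, since both sides of
`xᵖ = yᵠ` go to `1`. -/

open Equiv

section TorusGroup

variable {G : Type*} [Group G] {p q : ℤ} {a b : G}

lemma lift_torusRels_eq_one (hpq : a ^ p = b ^ q) :
    ∀ r ∈ TorusRels p q, FreeGroup.lift (fun i => cond i a b) r = 1 := by
  rintro r rfl
  simp [hpq]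

lemma exists_mul_ne_mul_torusGroup (hpq : a ^ p = b ^ q) (hab : a * b ≠ b * a) :
    ∃ g h : PresentedGroup (TorusRels p q), g * h ≠ h * g := by
  refine ⟨.of true, .of false, fun hcomm => hab ?_⟩
  simpa using congrArg (PresentedGroup.toGroup (lift_torusRels_eq_one hpq)) hcomm

end TorusGroup

namespace List

lemma formPerm_range_pow (m : ℕ) : (range m).formPerm ^ m = 1 := by
  simpa using formPerm_pow_length_eq_one_of_nodup _ nodup_range

lemma formPerm_range'_pow (s n : ℕ) : (range' s n).formPerm ^ n = 1 := by
  simpa using formPerm_pow_length_eq_one_of_nodup _ nodup_range'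

lemma formPerm_range_succ_apply_self {m : ℕ} (hm : 1 ≤ m) : (range (m + 1)).formPerm m = 0 := by
  obtain ⟨k, rfl⟩ := Nat.exists_eq_add_of_le' hm
  rw [range_succ, range_succ_eq_map]
  simp

lemma formPerm_range'_apply_self (s : ℕ) {n : ℕ} (hn : 1 ≤ n) :
    (range' s (n + 1)).formPerm s = s + 1 := by
  obtain ⟨k, rfl⟩ := Nat.exists_eq_add_of_le' hn
  have hnd := nodup_range' (s := s) (n := k + 2)
  rw [range'_succ, range'_succ] at hnd ⊢
  exact formPerm_apply_head _ _ _ hnd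

end List

lemma exists_perm_pow_eq_one_mul_ne {m n : ℕ} (hm : 2 ≤ m) (hn : 2 ≤ n) :
    ∃ a b : Perm ℕ, a ^ m = 1 ∧ b ^ n = 1 ∧ a * b ≠ b * a := by
  obtain ⟨m, rfl⟩ : ∃ k, m = k + 1 := ⟨m - 1, by omega⟩
  obtain ⟨n, rfl⟩ : ∃ k, n = k + 1 := ⟨n - 1, by omega⟩
  set a := (List.range (m + 1)).formPerm
  set b := (List.range' m (n + 1)).formPerm
  refine ⟨a, b, List.formPerm_range_pow _, List.formPerm_range'_pow _ _, fun hab => ?_⟩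
  have hab_m : a (b m) = b (a m) := congrArg (· m) hab
  have ha_succ : a (m + 1) = m + 1 := List.formPerm_apply_of_notMem (by simp)
  have hb_zero : b 0 = 0 := List.formPerm_apply_of_notMem (by rw [List.mem_range'_1]; omega)
  rw [List.formPerm_range'_apply_self m (by omega), ha_succ,
    List.formPerm_range_succ_apply_self (by omega), hb_zero] at hab_m
  exact m.succ_ne_zero hab_m

theorem torus_group_nonabelian (p q : ℤ) (hp : 1 < |p|) (hq : 1 < |q|) :
    ∃ g h : PresentedGroup (TorusRels p q), g * h ≠ h * g := by
  rw [Int.abs_eq_natAbs] at hp hq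
  obtain ⟨a, b, ha, hb, hab⟩ :=
    exists_perm_pow_eq_one_mul_ne (m := p.natAbs) (n := q.natAbs) (by omega) (by omega)
  refine exists_mul_ne_mul_torusGroup (a := a) (b := b) ?_ hab
  rw [pow_natAbs_eq_one.mp ha, pow_natAbs_eq_one.mp hb]
end

section
/- For integers p, q with |p| > 1 and |q| > 1, the commutator [x, y] is a generalized torsion element in the group G_{p,q} = ⟨x, y | xᵖ = yᵠ⟩. -/
section Aux

/-- A cycle-like permutation moving the first coordinate on the `z.2 = 0` fiber. -/
def permA (m n : ℕ) : Equiv.Perm (ZMod m × ZMod n) where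
  toFun z := (z.1 + if z.2 = 0 then 1 else 0, z.2)
  invFun z := (z.1 - if z.2 = 0 then 1 else 0, z.2)
  left_inv z := by simp
  right_inv z := by simp

/-- A cycle-like permutation moving the second coordinate on the `z.1 = 0` fiber. -/
def permB (m n : ℕ) : Equiv.Perm (ZMod m × ZMod n) where
  toFun z := (z.1, z.2 + if z.1 = 0 then 1 else 0)
  invFun z := (z.1, z.2 - if z.1 = 0 then 1 else 0)
  left_inv z := by simp
  right_inv z := by simp

lemma permA_pow (m n k : ℕ) (z : ZMod m × ZMod n) :
    ((permA m n ^ k) z) = (z.1 + if z.2 = 0 then (k : ZMod m) else 0, z.2) := by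
  induction k generalizing z with
  | zero => simp
  | succ k ih =>
    rw [pow_succ', Equiv.Perm.mul_apply, ih]
    simp only [permA, Equiv.coe_fn_mk]
    split_ifs with h <;> push_cast <;> simp [add_assoc, add_comm]

lemma permB_pow (m n k : ℕ) (z : ZMod m × ZMod n) :
    ((permB m n ^ k) z) = (z.1, z.2 + if z.1 = 0 then (k : ZMod n) else 0) := by
  induction k generalizing z with
  | zero => simp
  | succ k ih =>
    rw [pow_succ', Equiv.Perm.mul_apply, ih]
    simp only [permB, Equiv.coe_fn_mk]
    split_ifs with h <;> push_cast <;> simp [add_assoc, add_comm]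

lemma permA_pow_self (m n : ℕ) : permA m n ^ m = 1 := by
  ext z <;> simp [permA_pow]

lemma permB_pow_self (m n : ℕ) : permB m n ^ n = 1 := by
  ext z <;> simp [permB_pow]

lemma permA_zpow (m n : ℕ) (p : ℤ) (hm : p.natAbs = m) : permA m n ^ p = 1 := by
  rcases Int.natAbs_eq p with h | h
  · rw [h, hm, zpow_natCast, permA_pow_self]
  · rw [h, hm, zpow_neg, zpow_natCast, permA_pow_self, inv_one]

lemma permB_zpow (m n : ℕ) (q : ℤ) (hn : q.natAbs = n) : permB m n ^ q = 1 := by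
  rcases Int.natAbs_eq q with h | h
  · rw [h, hn, zpow_natCast, permB_pow_self]
  · rw [h, hn, zpow_neg, zpow_natCast, permB_pow_self, inv_one]

lemma key_ne (m n : ℕ) (hm : 1 < m) (hn : 1 < n) :
    (permA m n)⁻¹ * (permB m n)⁻¹ * permA m n * permB m n ≠ 1 := by
  haveI : Fact (1 < m) := ⟨hm⟩
  haveI : Fact (1 < n) := ⟨hn⟩
  intro h
  have h0 := DFunLike.congr_fun h ((0 : ZMod m), (0 : ZMod n))
  simp only [Equiv.Perm.mul_apply, Equiv.Perm.one_apply, Equiv.Perm.inv_def] at h0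
  simp [permA, permB, Prod.ext_iff] at h0

lemma prod_conj_desc {G : Type*} [Group G] (x y : G) (k : ℕ) :
    (((List.range k).reverse.map (fun i => x ^ i)).map
        (fun g => g⁻¹ * (x⁻¹ * y⁻¹ * x * y) * g)).prod
      = (x ^ k)⁻¹ * y⁻¹ * x ^ k * y := by
  induction k with
  | zero => simp
  | succ k ih =>
    rw [List.range_succ, List.reverse_append, List.reverse_singleton, List.singleton_append,
      List.map_cons, List.map_cons, List.prod_cons, ih]
    group

lemma prod_conj_asc {G : Type*} [Group G] (x y : G) (k : ℕ) :
    (((List.range k).map (fun i => (x ^ i)⁻¹)).map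
        (fun g => g⁻¹ * (x⁻¹ * y⁻¹ * x * y) * g)).prod
      = x⁻¹ * y⁻¹ * x ^ k * y * x * (x ^ k)⁻¹ := by
  induction k with
  | zero => simp
  | succ k ih =>
    rw [List.range_succ, List.map_append, List.map_append, List.prod_append, ih]
    simp only [List.map_cons, List.map_nil, List.prod_cons, List.prod_nil, inv_inv, mul_one]
    group

end Aux

theorem torus_group_generalized_torsion (p q : ℤ) (hp : 1 < |p|) (hq : 1 < |q|) :
    let x : PresentedGroup (TorusRels p q) := PresentedGroup.of true
    let y : PresentedGroup (TorusRels p q) := PresentedGroup.of false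
    x⁻¹ * y⁻¹ * x * y ≠ 1 ∧ ∃ l : List (PresentedGroup (TorusRels p q)), l ≠ [] ∧
      (l.map (fun g => g⁻¹ * (x⁻¹ * y⁻¹ * x * y) * g)).prod = 1 := by
  intro x y
  set m := p.natAbs with hmdef
  set n := q.natAbs with hndef
  have hm : 1 < m := by
    have := hp; rw [Int.abs_eq_natAbs] at this; exact_mod_cast this
  have hn : 1 < n := by
    have := hq; rw [Int.abs_eq_natAbs] at this; exact_mod_cast this
  constructor
  · -- nontriviality via the permutation representation
    set f : Bool → Equiv.Perm (ZMod m × ZMod n) :=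
      fun b => if b then permA m n else permB m n with hf
    have hrels : ∀ r ∈ TorusRels p q, FreeGroup.lift f r = 1 := by
      rintro r hr
      rcases hr with rfl
      rw [map_mul, map_inv, map_zpow, map_zpow, FreeGroup.lift_apply_of, FreeGroup.lift_apply_of]
      simp only [hf, if_true, if_false, Bool.false_eq_true]
      rw [permA_zpow m n p rfl, permB_zpow m n q rfl]
      simp
    set φ := PresentedGroup.toGroup hrels with hφ
    intro hone
    have h1 : φ x = permA m n := PresentedGroup.toGroup.of hrels
    have h2 : φ y = permB m n := PresentedGroup.toGroup.of hrels
    have := congrArg φ hone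
    rw [map_mul, map_mul, map_mul, map_inv, map_inv, map_one, h1, h2] at this
    exact key_ne m n hm hn this
  · -- the generalized torsion relation
    have hxy : x ^ p = y ^ q := by
      have h1 : PresentedGroup.mk (TorusRels p q)
          (FreeGroup.of true ^ p * (FreeGroup.of false ^ q)⁻¹) = 1 := by
        apply (QuotientGroup.eq_one_iff _).mpr
        exact Subgroup.subset_normalClosure rfl
      rw [map_mul, map_inv, map_zpow, map_zpow] at h1
      exact mul_inv_eq_one.mp h1
    rcases lt_or_gt_of_ne (show p ≠ 0 by rintro rfl; simp at hp) with hneg | hpos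
    · -- p < 0
      have hxk : x ^ m = (y ^ q)⁻¹ := by
        rw [← zpow_natCast, show ((m : ℕ) : ℤ) = -p by omega, zpow_neg, hxy]
      refine ⟨(List.range m).map (fun i => (x ^ i)⁻¹), ?_, ?_⟩
      · simp only [ne_eq, List.map_eq_nil_iff, List.range_eq_nil]; omega
      · rw [prod_conj_asc]
        have h2 : y⁻¹ * x ^ m * y = x ^ m := by rw [hxk]; group
        rw [show x⁻¹ * y⁻¹ * x ^ m * y * x * (x ^ m)⁻¹
              = x⁻¹ * (y⁻¹ * x ^ m * y) * x * (x ^ m)⁻¹ by group, h2]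
        group
    · -- p > 0
      have hxk : x ^ m = y ^ q := by
        rw [← zpow_natCast, show ((m : ℕ) : ℤ) = p by omega, hxy]
      refine ⟨(List.range m).reverse.map (fun i => x ^ i), ?_, ?_⟩
      · simp only [ne_eq, List.map_eq_nil_iff, List.reverse_eq_nil_iff, List.range_eq_nil]; omega
      · rw [prod_conj_desc, hxk]
        group
end

section
/- For integers p, q with |p| > 1 and |q| > 1, the group ⟨x, y | xᵖ = yᵠ⟩ is not bi-orderable. -/
/-!
In a bi-ordered group `x ↦ xⁿ` is strictly monotone, so roots are unique. Hence if `xᵖ` commutes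
with `y` then so does `x`, because `(y x y⁻¹)ᵖ = y xᵖ y⁻¹ = xᵖ`. In `⟨x, y | xᵖ = yᵠ⟩` the element
`xᵖ = yᵠ` commutes with `y`, yet `x` and `y` do not commute: sending them to the rotations of `ℂ` of
order `|p|` about `0` and of order `|q|` about `1` defines a homomorphism to a non-abelian group.
-/

/-- `IsMulTorsionFree` asks for unique roots, which for non-abelian groups is stronger than having
no torsion. -/
theorem Commute.of_zpow_left {G : Type*} [Group G] [IsMulTorsionFree G] {a b : G} {n : ℤ}
    (hn : n ≠ 0) (h : Commute (a ^ n) b) : Commute a b := by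
  have hconj : b * a * b⁻¹ = a :=
    zpow_left_injective hn <| by
      change (b * a * b⁻¹) ^ n = a ^ n
      rw [conj_zpow, ← h.eq, mul_inv_cancel_right]
  rw [mul_inv_eq_iff_eq_mul] at hconj
  exact hconj.symm

theorem IsMulTorsionFree.of_biinvariant_strictTotalOrder {M : Type*} [Monoid M]
    (r : M → M → Prop) [IsStrictTotalOrder M r]
    (hr : ∀ a b c : M, r b c → r (a * b) (a * c) ∧ r (b * a) (c * a)) :
    IsMulTorsionFree M := by
  classical
  let := linearOrderOfSTO r
  have : MulLeftStrictMono M := ⟨fun a _ _ h => (hr a _ _ h).1⟩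
  have : MulRightStrictMono M := ⟨fun a _ _ h => (hr a _ _ h).2⟩
  infer_instance

theorem Complex.exists_zpow_eq_one_ne_one {p : ℤ} (hp : 1 < |p|) :
    ∃ ζ : ℂˣ, ζ ^ p = 1 ∧ ζ ≠ 1 := by
  have hn : 1 < p.natAbs := by rw [← Int.natCast_natAbs] at hp; exact_mod_cast hp
  have hζ := (Complex.isPrimitiveRoot_exp p.natAbs (by omega)).isUnit_unit (by omega)
  exact ⟨_, (hζ.zpow_eq_one_iff_dvd p).2 Int.natAbs_dvd_self, hζ.ne_one hn⟩

theorem not_commute_toPerm_conj_addRight {R : Type*} [CommRing R] [NoZeroDivisors R] {ζ ω : Rˣ}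
    (hζ : ζ ≠ 1) (hω : ω ≠ 1) :
    ¬ Commute (MulAction.toPerm ζ : Equiv.Perm R)
      (Equiv.addRight 1 * MulAction.toPerm ω * (Equiv.addRight 1)⁻¹) := by
  intro h
  have h0 := congrArg (· 0) h.eq
  simp only [Equiv.neg_addRight, Equiv.Perm.coe_mul, Equiv.coe_addRight, Function.comp_apply,
    zero_add, MulAction.toPerm_apply, smul_neg, Units.smul_def, smul_eq_mul, mul_one, smul_add,
    smul_zero] at h0
  have : ((ζ : R) - 1) * (1 - ω) = 0 := by linear_combination h0
  rcases mul_eq_zero.1 this with h | h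
  · exact hζ (Units.val_eq_one.1 (sub_eq_zero.1 h))
  · exact hω (Units.val_eq_one.1 (sub_eq_zero.1 h).symm)

theorem exists_not_commute_zpow_eq_one {p q : ℤ} (hp : 1 < |p|) (hq : 1 < |q|) :
    ∃ a b : Equiv.Perm ℂ, a ^ p = 1 ∧ b ^ q = 1 ∧ ¬ Commute a b := by
  obtain ⟨ζ, hζp, hζ⟩ := Complex.exists_zpow_eq_one_ne_one hp
  obtain ⟨ω, hωq, hω⟩ := Complex.exists_zpow_eq_one_ne_one hq
  refine ⟨_, _, ?_, ?_, not_commute_toPerm_conj_addRight hζ hω⟩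
  · rw [← MulAction.coe_toPermHom, ← map_zpow, hζp, map_one]
  · rw [conj_zpow, ← MulAction.coe_toPermHom, ← map_zpow, hωq, map_one, mul_one, mul_inv_cancel]

theorem TorusRels.of_zpow_eq (p q : ℤ) :
    (PresentedGroup.of true : PresentedGroup (TorusRels p q)) ^ p = PresentedGroup.of false ^ q := by
  have h := PresentedGroup.mk_eq_mk_of_mul_inv_mem (rels := TorusRels p q) (Set.mem_singleton _)
  rw [map_zpow, map_zpow] at h
  exact h

theorem TorusRels.not_commute_of {p q : ℤ} {H : Type*} [Group H] {a b : H} (hab : a ^ p = b ^ q)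
    (hc : ¬ Commute a b) :
    ¬ Commute (PresentedGroup.of true : PresentedGroup (TorusRels p q)) (PresentedGroup.of false) := by
  have hrels : ∀ r ∈ TorusRels p q, FreeGroup.lift (fun x => if x then a else b) r = 1 := by
    rintro _ rfl
    simp [hab]
  intro h
  exact hc (by simpa [PresentedGroup.toGroup.of] using h.map (PresentedGroup.toGroup hrels))

theorem torus_group_not_biorderable (p q : ℤ) (hp : 1 < |p|) (hq : 1 < |q|) :
    ¬ ∃ r : PresentedGroup (TorusRels p q) → PresentedGroup (TorusRels p q) → Prop,
      IsStrictTotalOrder (PresentedGroup (TorusRels p q)) r ∧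
      ∀ a b c : PresentedGroup (TorusRels p q),
        r b c → r (a * b) (a * c) ∧ r (b * a) (c * a) := by
  rintro ⟨r, hr, hinv⟩
  have := IsMulTorsionFree.of_biinvariant_strictTotalOrder r hinv
  have hp0 : p ≠ 0 := by rintro rfl; simp at hp
  obtain ⟨a, b, ha, hb, hab⟩ := exists_not_commute_zpow_eq_one hp hq
  refine TorusRels.not_commute_of (ha.trans hb.symm) hab (Commute.of_zpow_left hp0 ?_)
  rw [TorusRels.of_zpow_eq]
  exact (Commute.refl _).zpow_left q
end

section
/- In the group G = ⟨a, b | b²a⁻²b² = a⁻¹b³a⁻¹⟩ (the knot group of the knot 5₂), the element c = a⁻¹bab⁻¹ satisfies: the nonempty product of conjugates of c given in the proof equals the identity; concretely, a⁴(b⁻²a⁻¹b³a)a⁻⁴(b²ab⁻³a⁻¹) = 1, where both b⁻²a⁻¹b³a and b²ab⁻³a⁻¹ are products of conjugates of c. -/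
/-- The 5₂ knot group ⟨a, b | b²a⁻²b² = a⁻¹b³a⁻¹⟩, with a ↦ true, b ↦ false. -/
def FiveTwoRels : Set (FreeGroup Bool) :=
  {FreeGroup.of false ^ 2 * (FreeGroup.of true)⁻¹ ^ 2 * FreeGroup.of false ^ 2 *
    ((FreeGroup.of true)⁻¹ * FreeGroup.of false ^ 3 * (FreeGroup.of true)⁻¹)⁻¹}

/-!
Write `[x]^g = g⁻¹ x g`. The semigroup `S` generated by the conjugates of `c = a⁻¹bab⁻¹` is
closed under conjugation, and the telescoping product `c · [c]^{b⁻¹}` equals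
`u = a⁻¹b²ab⁻²`, so `u ∈ S`. Modulo the relation,
`b⁻²a⁻¹b³a = [u]^{b²a⁻¹b²} · [c]^b` and `b²ab⁻³a⁻¹ = [u]^{b⁻²} · [c]^{a⁻¹}`, so both lie in `S`.
The relation also rewrites them as `a⁻²b²a²` and `a²b⁻²a⁻²`, which makes the product identity
a cancellation.
-/

abbrev conjProducts {G : Type*} [Group G] (c : G) : Subsemigroup G :=
  Subsemigroup.closure {z | ∃ g, z = g⁻¹ * c * g}

section conjProducts

variable {G : Type*} [Group G] {c : G}

theorem self_mem_conjProducts : c ∈ conjProducts c :=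
  Subsemigroup.subset_closure ⟨1, by group⟩

theorem conj_mem_conjProducts {x : G} (hx : x ∈ conjProducts c) (g : G) :
    g⁻¹ * x * g ∈ conjProducts c := by
  induction hx using Subsemigroup.closure_induction with
  | mem x hx =>
    obtain ⟨k, rfl⟩ := hx
    exact Subsemigroup.subset_closure ⟨k * g, by group⟩
  | mul x y _ _ hx hy =>
    have hxy : g⁻¹ * (x * y) * g = (g⁻¹ * x * g) * (g⁻¹ * y * g) := by group
    exact hxy ▸ mul_mem hx hy

theorem commutator_pow_mem_conjProducts (a b : G) (n : ℕ) :
    a⁻¹ * b ^ (n + 1) * a * b⁻¹ ^ (n + 1) ∈ conjProducts (a⁻¹ * b * a * b⁻¹) := by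
  induction n with
  | zero => simpa using self_mem_conjProducts
  | succ n ih =>
    have hstep : a⁻¹ * b ^ (n + 1 + 1) * a * b⁻¹ ^ (n + 1 + 1) =
        (a⁻¹ * b ^ (n + 1) * a * b⁻¹ ^ (n + 1)) *
          ((b⁻¹ ^ (n + 1))⁻¹ * (a⁻¹ * b * a * b⁻¹) * b⁻¹ ^ (n + 1)) := by
      group
    exact hstep ▸ mul_mem ih (conj_mem_conjProducts self_mem_conjProducts _)

end conjProducts

section FiveTwoRelation

variable {G : Type*} [Group G] {a b : G} (h : b ^ 2 * a⁻¹ ^ 2 * b ^ 2 = a⁻¹ * b ^ 3 * a⁻¹)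
include h

theorem fiveTwo_left_eq_conj : b⁻¹ ^ 2 * a⁻¹ * b ^ 3 * a = a⁻¹ ^ 2 * b ^ 2 * a ^ 2 :=
  calc b⁻¹ ^ 2 * a⁻¹ * b ^ 3 * a = b⁻¹ ^ 2 * (a⁻¹ * b ^ 3 * a⁻¹) * a ^ 2 := by group
    _ = a⁻¹ ^ 2 * b ^ 2 * a ^ 2 := by rw [← h]; group

theorem fiveTwo_right_eq_conj : b ^ 2 * a * b⁻¹ ^ 3 * a⁻¹ = a ^ 2 * b⁻¹ ^ 2 * a⁻¹ ^ 2 :=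
  calc b ^ 2 * a * b⁻¹ ^ 3 * a⁻¹ = b ^ 2 * (a⁻¹ * b ^ 3 * a⁻¹)⁻¹ * a⁻¹ ^ 2 := by group
    _ = a ^ 2 * b⁻¹ ^ 2 * a⁻¹ ^ 2 := by rw [← h]; group

theorem fiveTwo_left_mem_conjProducts :
    b⁻¹ ^ 2 * a⁻¹ * b ^ 3 * a ∈ conjProducts (a⁻¹ * b * a * b⁻¹) := by
  have hdecomp : b⁻¹ ^ 2 * a⁻¹ * b ^ 3 * a =
      (b ^ 2 * a⁻¹ * b ^ 2)⁻¹ * (a⁻¹ * b ^ 2 * a * b⁻¹ ^ 2) * (b ^ 2 * a⁻¹ * b ^ 2) *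
        (b⁻¹ * (a⁻¹ * b * a * b⁻¹) * b) :=
    calc b⁻¹ ^ 2 * a⁻¹ * b ^ 3 * a = b⁻¹ ^ 2 * a * b⁻¹ ^ 2 * (b ^ 2 * a⁻¹ ^ 2 * b ^ 2) * b * a := by
          group
      _ = _ := by rw [h]; group
  rw [hdecomp]
  exact mul_mem (conj_mem_conjProducts (commutator_pow_mem_conjProducts a b 1) _)
    (conj_mem_conjProducts self_mem_conjProducts _)

theorem fiveTwo_right_mem_conjProducts :
    b ^ 2 * a * b⁻¹ ^ 3 * a⁻¹ ∈ conjProducts (a⁻¹ * b * a * b⁻¹) := by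
  have hdecomp : b ^ 2 * a * b⁻¹ ^ 3 * a⁻¹ =
      (b⁻¹ ^ 2)⁻¹ * (a⁻¹ * b ^ 2 * a * b⁻¹ ^ 2) * b⁻¹ ^ 2 *
        (a⁻¹⁻¹ * (a⁻¹ * b * a * b⁻¹) * a⁻¹) :=
    calc b ^ 2 * a * b⁻¹ ^ 3 * a⁻¹
        = b ^ 2 * a⁻¹ * b ^ 2 * (b ^ 2 * a⁻¹ ^ 2 * b ^ 2)⁻¹ * b⁻¹ * a⁻¹ := by group
      _ = _ := by rw [h]; group
  rw [hdecomp]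
  exact mul_mem (conj_mem_conjProducts (commutator_pow_mem_conjProducts a b 1) _)
    (conj_mem_conjProducts self_mem_conjProducts _)

theorem fiveTwo_product_eq_one :
    a ^ 4 * (b⁻¹ ^ 2 * a⁻¹ * b ^ 3 * a) * a⁻¹ ^ 4 * (b ^ 2 * a * b⁻¹ ^ 3 * a⁻¹) = 1 := by
  rw [fiveTwo_left_eq_conj h, fiveTwo_right_eq_conj h]
  group

end FiveTwoRelation

theorem fiveTwo_relation :
    (PresentedGroup.of false : PresentedGroup FiveTwoRels) ^ 2 * (PresentedGroup.of true)⁻¹ ^ 2 *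
        PresentedGroup.of false ^ 2 =
      (PresentedGroup.of true)⁻¹ * PresentedGroup.of false ^ 3 * (PresentedGroup.of true)⁻¹ :=
  PresentedGroup.mk_eq_mk_of_mul_inv_mem (Set.mem_singleton _)

theorem fiveTwo_product_identity :
    let a : PresentedGroup FiveTwoRels := PresentedGroup.of true
    let b : PresentedGroup FiveTwoRels := PresentedGroup.of false
    let c := a⁻¹ * b * a * b⁻¹
    let S := Subsemigroup.closure {z : PresentedGroup FiveTwoRels | ∃ g, z = g⁻¹ * c * g}
    b⁻¹ ^ 2 * a⁻¹ * b ^ 3 * a ∈ S ∧ b ^ 2 * a * b⁻¹ ^ 3 * a⁻¹ ∈ S ∧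
      a ^ 4 * (b⁻¹ ^ 2 * a⁻¹ * b ^ 3 * a) * a⁻¹ ^ 4 * (b ^ 2 * a * b⁻¹ ^ 3 * a⁻¹) = 1 := by
  intro a b c S
  have hrel : b ^ 2 * a⁻¹ ^ 2 * b ^ 2 = a⁻¹ * b ^ 3 * a⁻¹ := fiveTwo_relation
  exact ⟨fiveTwo_left_mem_conjProducts hrel, fiveTwo_right_mem_conjProducts hrel,
    fiveTwo_product_eq_one hrel⟩
end

section
/- The group G = ⟨a, b | b²a⁻²b² = a⁻¹b³a⁻¹⟩ is not bi-orderable. -/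
/-!
Write `c k = a ^ k * b * a ^ (-k)`. Conjugating the relation by `a ^ k` gives
`c (k + 1) ^ 2 * c (k - 1) ^ 2 = c k ^ 3`. In a bi-ordered group conjugation by `a` is an order
automorphism, so `c` is monotone or antitone. If `c` is monotone and `b > 1`, then `c 2 ≤ c 3`
forces `c 1 ^ 2 ≤ c 2`, whence `c 1 ^ 4 * c 0 ^ 2 ≤ c 1 ^ 3`, which is absurd since `c 0, c 1 > 1`.
The remaining cases reduce to this one by reversing the order or passing to `k ↦ (c (-k))⁻¹`,
so `b = 1`; but `b` survives in a permutation representation.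
-/

theorem StrictMono.monotone_int_orbit {α : Type*} [LinearOrder α] {f : α → α}
    (hf : StrictMono f) {c : ℤ → α} (hc : ∀ k, c (k + 1) = f (c k)) (h01 : c 0 ≤ c 1) :
    Monotone c := by
  refine monotone_int_of_le_succ fun k => ?_
  induction k with
  | zero => simpa using h01
  | succ k ih => simpa only [← hc] using hf.monotone ih
  | pred k ih =>
    rw [sub_add_cancel, ← hf.le_iff_le, ← hc, ← hc, sub_add_cancel]
    exact ih

theorem StrictMono.monotone_or_antitone_int_orbit {α : Type*} [LinearOrder α] {f : α → α}
    (hf : StrictMono f) {c : ℤ → α} (hc : ∀ k, c (k + 1) = f (c k)) : Monotone c ∨ Antitone c :=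
  (le_total (c 0) (c 1)).imp (hf.monotone_int_orbit hc)
    (hf.dual.monotone_int_orbit (α := αᵒᵈ) hc)

/-- The exponents `2, 3, 2` are the coefficients of the Alexander polynomial `2t² - 3t + 2`
of `5₂`. -/
def FiveTwoRecurrence {G : Type*} [Monoid G] (c : ℤ → G) : Prop :=
  ∀ k, c (k + 1) ^ 2 * c (k - 1) ^ 2 = c k ^ 3

namespace FiveTwoRecurrence

variable {G : Type*} [Group G] {c : ℤ → G}

theorem reflect (h : FiveTwoRecurrence c) : FiveTwoRecurrence fun k => (c (-k))⁻¹ := by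
  intro k
  dsimp only
  rw [show -(k + 1) = -k - 1 by ring, show -(k - 1) = -k + 1 by ring, inv_pow _ 3, ← h (-k)]
  group

variable [LinearOrder G] [MulLeftMono G] [MulRightMono G]

theorem not_one_lt_of_monotone (h : FiveTwoRecurrence c) (hc : Monotone c) : ¬ 1 < c 0 := by
  intro h0
  have h1 : 1 < c 1 := h0.trans_le (hc zero_le_one)
  have h12 : c 1 ^ 2 ≤ c 2 := by
    refine le_of_mul_le_mul_left' (a := c 2 ^ 2) ?_
    calc c 2 ^ 2 * c 1 ^ 2 ≤ c 3 ^ 2 * c 1 ^ 2 :=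
          mul_le_mul_left (pow_le_pow_left' (hc (by norm_num)) 2) _
      _ = c 2 ^ 3 := h 2
      _ = c 2 ^ 2 * c 2 := pow_succ _ _
  have : c 1 ^ 3 * (c 1 * c 0 ^ 2) ≤ c 1 ^ 3 * 1 := by
    calc c 1 ^ 3 * (c 1 * c 0 ^ 2) = (c 1 ^ 2) ^ 2 * c 0 ^ 2 := by group
      _ ≤ c 2 ^ 2 * c 0 ^ 2 := mul_le_mul_left (pow_le_pow_left' h12 2) _
      _ = c 1 ^ 3 * 1 := by rw [mul_one]; exact h 1
  exact (le_of_mul_le_mul_left' this).not_gt (one_lt_mul' h1 (one_lt_pow' h0 two_ne_zero))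

theorem eq_one_of_monotone (h : FiveTwoRecurrence c) (hc : Monotone c) : c 0 = 1 := by
  refine le_antisymm (not_lt.1 (h.not_one_lt_of_monotone hc)) ?_
  have := h.reflect.not_one_lt_of_monotone fun i j hij => inv_le_inv_iff.2 (hc (neg_le_neg hij))
  simpa using this

theorem eq_one_of_antitone (h : FiveTwoRecurrence c) (hc : Antitone c) : c 0 = 1 :=
  eq_one_of_monotone (G := Gᵒᵈ) h hc.dual_right

end FiveTwoRecurrence

theorem fiveTwoRecurrence_conj_zpow {G : Type*} [Group G] {x y : G}
    (hrel : y ^ 2 * x⁻¹ ^ 2 * y ^ 2 = x⁻¹ * y ^ 3 * x⁻¹) :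
    FiveTwoRecurrence fun k => x ^ k * y * (x ^ k)⁻¹ := by
  intro k
  calc (x ^ (k + 1) * y * (x ^ (k + 1))⁻¹) ^ 2 * (x ^ (k - 1) * y * (x ^ (k - 1))⁻¹) ^ 2
      = x ^ k * (x * (y ^ 2 * x⁻¹ ^ 2 * y ^ 2) * x) * (x ^ k)⁻¹ := by
        simp only [conj_pow]; group
    _ = (x ^ k * y * (x ^ k)⁻¹) ^ 3 := by rw [hrel, conj_pow]; group

theorem eq_one_of_fiveTwo_relation {G : Type*} [Group G] [LinearOrder G] [MulLeftMono G]
    [MulRightMono G] {x y : G} (hrel : y ^ 2 * x⁻¹ ^ 2 * y ^ 2 = x⁻¹ * y ^ 3 * x⁻¹) : y = 1 := by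
  have hconj : StrictMono fun g : G => x * g * x⁻¹ := fun _ _ h => by simpa using h
  have hstep (k : ℤ) :
      x ^ (k + 1) * y * (x ^ (k + 1))⁻¹ = x * (x ^ k * y * (x ^ k)⁻¹) * x⁻¹ := by
    group
  have hrec := fiveTwoRecurrence_conj_zpow hrel
  rcases hconj.monotone_or_antitone_int_orbit (c := fun k => x ^ k * y * (x ^ k)⁻¹) hstep
    with hc | hc
  · simpa using hrec.eq_one_of_monotone hc
  · simpa using hrec.eq_one_of_antitone hc

set_option maxRecDepth 4000 in
theorem fiveTwo_of_false_ne_one : (PresentedGroup.of false : PresentedGroup FiveTwoRels) ≠ 1 := by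
  -- `b` lies in the commutator subgroup, so a nonabelian quotient is needed.
  let f : Bool → Equiv.Perm (Fin 5) := fun t =>
    if t then [2, 3, 4].formPerm else [0, 2, 4, 1, 3].formPerm
  have hf : ∀ w ∈ FiveTwoRels, FreeGroup.lift f w = 1 := by
    intro w hw
    obtain rfl : w = _ := hw
    simp only [map_mul, map_pow, map_inv, FreeGroup.lift_apply_of, f]
    decide
  intro h
  have := congrArg (PresentedGroup.toGroup hf) h
  rw [PresentedGroup.toGroup.of, map_one] at this
  exact absurd this (by decide)

theorem fiveTwo_not_biorderable :
    ¬ ∃ r : PresentedGroup FiveTwoRels → PresentedGroup FiveTwoRels → Prop,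
      IsStrictTotalOrder (PresentedGroup FiveTwoRels) r ∧
      ∀ x y z : PresentedGroup FiveTwoRels,
        r y z → r (x * y) (x * z) ∧ r (y * x) (z * x) := by
  rintro ⟨r, hr, hinv⟩
  classical
  let := linearOrderOfSTO r
  have : MulLeftStrictMono (PresentedGroup FiveTwoRels) := ⟨fun x _ _ h => (hinv x _ _ h).1⟩
  have : MulRightStrictMono (PresentedGroup FiveTwoRels) := ⟨fun x _ _ h => (hinv x _ _ h).2⟩
  have := mulLeftMono_of_mulLeftStrictMono (PresentedGroup FiveTwoRels)
  have := mulRightMono_of_mulRightStrictMono (PresentedGroup FiveTwoRels)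
  have h := eq_one_of_fiveTwo_relation fiveTwo_relation
  exact fiveTwo_of_false_ne_one h
end
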